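/- Total energy conservation of the semi-discrete Scheme-I Lorentz-force/Maxwell step (core of Theorem 4.1): let L₁, L₂, L₃ > 0 and Δt ∈ ℝ; let E⁰, E¹, B⁰, B¹ : ℝ³ → ℝ³ be continuously differentiable and L-periodic, and let ρ : ℝ³ → ℝ and u*, u¹ : ℝ³ → ℝ³ be continuous and L-periodic. Suppose that for all x ∈ ℝ³: (i) B¹(x) − B⁰(x) = −Δt · curl((E⁰ + E¹)/2)(x); (ii) E¹(x) − E⁰(x) = Δt · curl((B⁰ + B¹)/2)(x) − Δt · ρ(x)(u*(x) + u¹(x))/2; (iii) u¹(x) − u*(x) = Δt · ((E⁰(x) + E¹(x))/2 + ((u*(x) + u¹(x))/2) × ((B⁰(x) + B¹(x))/2)). Then ∫_Q (ρ(x)‖u¹(x)‖² + ‖E¹(x)‖² + ‖B¹(x)‖²) dx = ∫_Q (ρ(x)‖u*(x)‖² + ‖E⁰(x)‖² + ‖B⁰(x)‖²) dx. Since ρ and the temperature are unchanged in this step, this yields the conservation ℰ_total^{n+1} = ℰ_total^n of the total energy ℰ_total = (1/2)∫(ρ‖u‖² + 3ρT) dx + (1/2)∫(‖E‖² + ‖B‖²)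 dx asserted in Theorem 4.1. -/

import Mathlib

open scoped BigOperators RealInnerProductSpace
open MeasureTheory

/-- A function on `ℝ³` is `L`-periodic if it is invariant under the shift by
`L d` in each coordinate direction `d`. -/
def IsLPeriodic {α : Type*} (L : Fin 3 → ℝ) (g : EuclideanSpace ℝ (Fin 3) → α) : Prop :=
  ∀ (x : EuclideanSpace ℝ (Fin 3)) (d : Fin 3), g (x + L d • EuclideanSpace.single d 1) = g x

/-- The period cell `Q = [0,L₁] × [0,L₂] × [0,L₃]`. -/
def periodCell (L : Fin 3 → ℝ) : Set (EuclideanSpace ℝ (Fin 3)) :=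
  {x | ∀ d : Fin 3, x d ∈ Set.Icc 0 (L d)}

/-- The curl of a vector field on `ℝ³`,
`curl V = (∂₂V₃ − ∂₃V₂, ∂₃V₁ − ∂₁V₃, ∂₁V₂ − ∂₂V₁)`, expressed via `fderiv`. -/
noncomputable def curl3 (V : EuclideanSpace ℝ (Fin 3) → EuclideanSpace ℝ (Fin 3))
    (x : EuclideanSpace ℝ (Fin 3)) : EuclideanSpace ℝ (Fin 3) :=
  (EuclideanSpace.equiv (Fin 3) ℝ).symm
    ![fderiv ℝ V x (EuclideanSpace.single 1 1) 2 - fderiv ℝ V x (EuclideanSpace.single 2 1) 1,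
      fderiv ℝ V x (EuclideanSpace.single 2 1) 0 - fderiv ℝ V x (EuclideanSpace.single 0 1) 2,
      fderiv ℝ V x (EuclideanSpace.single 0 1) 1 - fderiv ℝ V x (EuclideanSpace.single 1 1) 0]

/-- The standard cross product on Euclidean three-space. -/
noncomputable def cross3 (a b : EuclideanSpace ℝ (Fin 3)) : EuclideanSpace ℝ (Fin 3) :=
  (EuclideanSpace.equiv (Fin 3) ℝ).symm
    ![a 1 * b 2 - a 2 * b 1, a 2 * b 0 - a 0 * b 2, a 0 * b 1 - a 1 * b 0]

/-! ### Auxiliary material for the proof -/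

local notation "E3" => EuclideanSpace ℝ (Fin 3)

/-- The canonical continuous linear equivalence from `Fin 3 → ℝ` to Euclidean space. -/
noncomputable def c3 : (Fin 3 → ℝ) ≃L[ℝ] EuclideanSpace ℝ (Fin 3) :=
  (EuclideanSpace.equiv (Fin 3) ℝ).symm

lemma norm_sq3 (a : E3) : ‖a‖^2 = a 0^2 + a 1^2 + a 2^2 := by
  rw [EuclideanSpace.norm_eq, Real.sq_sqrt (by positivity)]
  simp [Fin.sum_univ_three, sq_abs]

lemma fderiv_cmp {f : E3 → E3} {x : E3} (hf : DifferentiableAt ℝ f x) (j : Fin 3) (v : E3) :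
    fderiv ℝ (fun y => f y j) x v = fderiv ℝ f x v j := by
  have h : (fun y => f y j) = (EuclideanSpace.proj (𝕜 := ℝ) j) ∘ f := rfl
  rw [h, fderiv_comp x (EuclideanSpace.proj (𝕜 := ℝ) j).differentiableAt hf,
    ContinuousLinearMap.fderiv]
  rfl

lemma diff_cmp {f : E3 → E3} (hf : Differentiable ℝ f) (j : Fin 3) :
    Differentiable ℝ (fun y => f y j) :=
  (EuclideanSpace.proj (𝕜 := ℝ) j).differentiable.comp hf

lemma fderiv_mul3 {p q : E3 → ℝ} {x : E3} (hp : DifferentiableAt ℝ p x)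
    (hq : DifferentiableAt ℝ q x) (v : E3) :
    fderiv ℝ (fun y => p y * q y) x v = fderiv ℝ p x v * q x + p x * fderiv ℝ q x v := by
  rw [fderiv_fun_mul hp hq]
  simp only [ContinuousLinearMap.add_apply, ContinuousLinearMap.coe_smul', Pi.smul_apply,
    smul_eq_mul]
  ring

/-- The divergence of a cross product: `div (E × B) = B ⬝ curl E - E ⬝ curl B`,
expressed with the domain pulled back to `Fin 3 → ℝ`. -/
lemma div_cross (Ef Bf : E3 → E3) (hEf : Differentiable ℝ Ef) (hBf : Differentiable ℝ Bf)
    (y : Fin 3 → ℝ) :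
    ∑ i, fderiv ℝ (fun z => cross3 (Ef (c3 z)) (Bf (c3 z)) i) y (Pi.single i 1)
      = (Bf (c3 y) 0 * curl3 Ef (c3 y) 0 + Bf (c3 y) 1 * curl3 Ef (c3 y) 1
          + Bf (c3 y) 2 * curl3 Ef (c3 y) 2)
        - (Ef (c3 y) 0 * curl3 Bf (c3 y) 0 + Ef (c3 y) 1 * curl3 Bf (c3 y) 1
          + Ef (c3 y) 2 * curl3 Bf (c3 y) 2) := by
  set x := c3 y with hx
  have hE := fun j => diff_cmp hEf j
  have hB := fun j => diff_cmp hBf j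
  have key : ∀ (i a b a' b' : Fin 3),
      (fun w : E3 => cross3 (Ef w) (Bf w) i) = (fun w => Ef w a * Bf w b - Ef w a' * Bf w b') →
      fderiv ℝ (fun z => cross3 (Ef (c3 z)) (Bf (c3 z)) i) y (Pi.single i 1)
        = (fderiv ℝ Ef x (EuclideanSpace.single i 1) a * Bf x b
            + Ef x a * fderiv ℝ Bf x (EuclideanSpace.single i 1) b)
          - (fderiv ℝ Ef x (EuclideanSpace.single i 1) a' * Bf x b'
            + Ef x a' * fderiv ℝ Bf x (EuclideanSpace.single i 1) b') := by
    intro i a b a' b' hfun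
    have h2 : (fun z => cross3 (Ef (c3 z)) (Bf (c3 z)) i)
        = (fun w : E3 => Ef w a * Bf w b - Ef w a' * Bf w b') ∘ c3 := by
      funext z; exact congrFun hfun (c3 z)
    rw [h2, ContinuousLinearEquiv.comp_right_fderiv]
    simp only [ContinuousLinearMap.coe_comp', Function.comp_apply]
    have hc : ((c3 : (Fin 3 → ℝ) →L[ℝ] E3) : (Fin 3 → ℝ) → E3) (Pi.single i 1)
        = EuclideanSpace.single i 1 := rfl
    rw [hc]
    have hd1 : DifferentiableAt ℝ (fun w => Ef w a * Bf w b) x :=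
      ((hE a x).mul (hB b x))
    have hd2 : DifferentiableAt ℝ (fun w => Ef w a' * Bf w b') x :=
      ((hE a' x).mul (hB b' x))
    rw [fderiv_fun_sub hd1 hd2]
    simp only [ContinuousLinearMap.coe_sub', Pi.sub_apply]
    rw [fderiv_mul3 (hE a x) (hB b x), fderiv_mul3 (hE a' x) (hB b' x),
      fderiv_cmp (hEf x), fderiv_cmp (hEf x), fderiv_cmp (hBf x), fderiv_cmp (hBf x)]
  rw [Fin.sum_univ_three,
    key 0 1 2 2 1 (by funext w; simp [cross3]),
    key 1 2 0 0 2 (by funext w; simp [cross3]),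
    key 2 0 1 1 0 (by funext w; simp [cross3])]
  simp only [curl3]
  simp
  ring

lemma insertNth_shift (i : Fin 3) (r : ℝ) (x : Fin 2 → ℝ) :
    Fin.insertNth (α := fun _ => ℝ) i r x
      = Fin.insertNth (α := fun _ => ℝ) i 0 x + r • (Pi.single i 1 : Fin 3 → ℝ) := by
  funext j
  by_cases h : j = i
  · subst h; simp
  · rcases Fin.exists_succAbove_eq h with ⟨k, rfl⟩
    simp [Fin.insertNth_apply_succAbove, Pi.single_eq_of_ne (Fin.succAbove_ne i k)]

/-- The integral over the period cell of the divergence of a `C¹` periodic vector field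
vanishes (domain transported to `Fin 3 → ℝ`). -/
lemma integral_div_zero (L : Fin 3 → ℝ) (hL : ∀ d, 0 < L d)
    (V : E3 → E3) (hV : ContDiff ℝ 1 V) (hper : IsLPeriodic L V) :
    ∫ y in Set.Icc (0 : Fin 3 → ℝ) L,
      ∑ i, fderiv ℝ (fun z => V (c3 z) i) y (Pi.single i 1) = 0 := by
  have hWc : ∀ i : Fin 3, ContDiff ℝ 1 (fun z => V (c3 z) i) := fun i =>
    (EuclideanSpace.proj (𝕜 := ℝ) i).contDiff.comp (hV.comp c3.contDiff)
  have hle : (0 : Fin 3 → ℝ) ≤ L := fun i => (hL i).le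
  have hdiv := MeasureTheory.integral_divergence_of_hasFDerivAt_off_countable'
    (0 : Fin 3 → ℝ) L hle (fun i z => V (c3 z) i)
    (fun i y => fderiv ℝ (fun z => V (c3 z) i) y) ∅ Set.countable_empty
    (fun i => ((hWc i).continuous).continuousOn)
    (fun x _ i => ((hWc i).differentiable one_ne_zero x).hasFDerivAt)
    ((continuous_finset_sum _ fun i _ =>
        ((hWc i).continuous_fderiv one_ne_zero).clm_apply continuous_const).continuousOn.integrableOn_compact
      isCompact_Icc)
  rw [hdiv]
  apply Finset.sum_eq_zero
  intro i _
  rw [sub_eq_zero]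
  apply setIntegral_congr_fun measurableSet_Icc
  intro x _
  show V (c3 (Fin.insertNth i (L i) x)) i = V (c3 (Fin.insertNth i (0:ℝ) x)) i
  rw [show Fin.insertNth (α := fun _ => ℝ) i (L i) x
      = Fin.insertNth (α := fun _ => ℝ) i 0 x + L i • (Pi.single i 1 : Fin 3 → ℝ) from
    insertNth_shift i (L i) x, map_add, _root_.map_smul]
  have hc : c3 (Pi.single i 1) = EuclideanSpace.single i 1 := rfl
  rw [hc]
  rw [hper (c3 (Fin.insertNth i (0:ℝ) x)) i]

/-- Pointwise energy identity following from the three update equations. -/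
lemma energy_pointwise (Δt ρx : ℝ) (e0 e1 b0 b1 us uo cE cB : E3)
    (hB' : b1 - b0 = -(Δt • cE))
    (hE' : e1 - e0 = Δt • cB - Δt • (ρx • (((2:ℝ)⁻¹) • (us + uo))))
    (hu' : uo - us = Δt • (((2:ℝ)⁻¹) • (e0 + e1)
      + cross3 (((2:ℝ)⁻¹) • (us + uo)) (((2:ℝ)⁻¹) • (b0 + b1)))) :
    ρx * ‖uo‖^2 + ‖e1‖^2 + ‖b1‖^2
      = ρx * ‖us‖^2 + ‖e0‖^2 + ‖b0‖^2
        + 2 * Δt * (((2:ℝ)⁻¹ * (e0 0 + e1 0) * cB 0 + (2:ℝ)⁻¹ * (e0 1 + e1 1) * cB 1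
            + (2:ℝ)⁻¹ * (e0 2 + e1 2) * cB 2)
          - ((2:ℝ)⁻¹ * (b0 0 + b1 0) * cE 0 + (2:ℝ)⁻¹ * (b0 1 + b1 1) * cE 1
            + (2:ℝ)⁻¹ * (b0 2 + b1 2) * cE 2)) := by
  have cmp : ∀ {v w : E3}, v = w → ∀ i, v i = w i := fun h i => by rw [h]
  have hB0 := cmp hB' 0; have hB1 := cmp hB' 1; have hB2 := cmp hB' 2
  have hE0 := cmp hE' 0; have hE1 := cmp hE' 1; have hE2 := cmp hE' 2
  have hu0 := cmp hu' 0; have hu1 := cmp hu' 1; have hu2 := cmp hu' 2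
  simp only [PiLp.sub_apply, PiLp.add_apply, PiLp.smul_apply, PiLp.neg_apply, smul_eq_mul,
    cross3] at hB0 hB1 hB2 hE0 hE1 hE2 hu0 hu1 hu2
  simp only [EuclideanSpace.equiv, PiLp.continuousLinearEquiv_symm_apply,
    PiLp.toLp_apply, Matrix.cons_val_zero, Matrix.cons_val_one, Matrix.head_cons,
    Matrix.cons_val_two, Matrix.tail_cons] at hu0 hu1 hu2
  rw [norm_sq3 uo, norm_sq3 us, norm_sq3 e0, norm_sq3 e1, norm_sq3 b0, norm_sq3 b1]
  linear_combination (hB0 * (b1 0 + b0 0)) + (hB1 * (b1 1 + b0 1)) + (hB2 * (b1 2 + b0 2))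
    + (hE0 * (e1 0 + e0 0)) + (hE1 * (e1 1 + e0 1)) + (hE2 * (e1 2 + e0 2))
    + (hu0 * (ρx * (uo 0 + us 0))) + (hu1 * (ρx * (uo 1 + us 1)))
    + (hu2 * (ρx * (uo 2 + us 2)))

/-- Transfer of set integrals over the period cell to the cube in `Fin 3 → ℝ`. -/
lemma integral_periodCell (L : Fin 3 → ℝ) (G : E3 → ℝ) :
    ∫ x in periodCell L, G x = ∫ y in Set.Icc (0 : Fin 3 → ℝ) L, G (c3 y) := by
  have hQ : periodCell L
      = (MeasurableEquiv.toLp 2 (Fin 3 → ℝ)).symm ⁻¹' (Set.Icc (0 : Fin 3 → ℝ) L) := by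
    ext x
    simp [periodCell, Set.mem_Icc, Pi.le_def, forall_and]
  have h := (EuclideanSpace.volume_preserving_symm_measurableEquiv_toLp (Fin 3)).setIntegral_preimage_emb
    (MeasurableEquiv.measurableEmbedding _) (fun y => G (c3 y)) (Set.Icc (0 : Fin 3 → ℝ) L)
  rw [hQ, ← h]
  rfl
/-- Total energy conservation of the semi-discrete Scheme-I
Lorentz-force/Maxwell step (core of Theorem 4.1): the total energy
`∫_Q (ρ‖u‖² + ‖E‖² + ‖B‖²) dx` is conserved. -/
theorem schemeI_semidiscrete_total_energy
    (L : Fin 3 → ℝ) (hL : ∀ d, 0 < L d) (Δt : ℝ)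
    (E0 E1 B0 B1 : EuclideanSpace ℝ (Fin 3) → EuclideanSpace ℝ (Fin 3))
    (hE0 : ContDiff ℝ 1 E0) (hE1 : ContDiff ℝ 1 E1)
    (hB0 : ContDiff ℝ 1 B0) (hB1 : ContDiff ℝ 1 B1)
    (hE0per : IsLPeriodic L E0) (hE1per : IsLPeriodic L E1)
    (hB0per : IsLPeriodic L B0) (hB1per : IsLPeriodic L B1)
    (ρ : EuclideanSpace ℝ (Fin 3) → ℝ)
    (ustar u1 : EuclideanSpace ℝ (Fin 3) → EuclideanSpace ℝ (Fin 3))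
    (hρ : Continuous ρ) (hustar : Continuous ustar) (hu1 : Continuous u1)
    (hρper : IsLPeriodic L ρ) (hustarper : IsLPeriodic L ustar)
    (hu1per : IsLPeriodic L u1)
    (hB : ∀ x, B1 x - B0 x = -(Δt • curl3 (fun y => ((2:ℝ)⁻¹) • (E0 y + E1 y)) x))
    (hE : ∀ x, E1 x - E0 x =
      Δt • curl3 (fun y => ((2:ℝ)⁻¹) • (B0 y + B1 y)) x
        - Δt • (ρ x • (((2:ℝ)⁻¹) • (ustar x + u1 x))))
    (hu : ∀ x, u1 x - ustar x =
      Δt • (((2:ℝ)⁻¹) • (E0 x + E1 x)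
        + cross3 (((2:ℝ)⁻¹) • (ustar x + u1 x)) (((2:ℝ)⁻¹) • (B0 x + B1 x)))) :
    ∫ x in periodCell L, (ρ x * ‖u1 x‖ ^ 2 + ‖E1 x‖ ^ 2 + ‖B1 x‖ ^ 2)
      = ∫ x in periodCell L, (ρ x * ‖ustar x‖ ^ 2 + ‖E0 x‖ ^ 2 + ‖B0 x‖ ^ 2) := by
  -- abbreviations
  have hEf : ContDiff ℝ 1 (fun y => ((2:ℝ)⁻¹) • (E0 y + E1 y)) := (hE0.add hE1).const_smul _
  have hBf : ContDiff ℝ 1 (fun y => ((2:ℝ)⁻¹) • (B0 y + B1 y)) := (hB0.add hB1).const_smul _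
  -- the Poynting-type vector field
  set V : EuclideanSpace ℝ (Fin 3) → EuclideanSpace ℝ (Fin 3) :=
    fun x => cross3 (((2:ℝ)⁻¹) • (E0 x + E1 x)) (((2:ℝ)⁻¹) • (B0 x + B1 x)) with hVdef
  have hVc : ContDiff ℝ 1 V := by
    rw [hVdef]
    refine c3.contDiff.comp ?_
    rw [contDiff_pi]
    intro i
    have hcomp : ∀ (f : EuclideanSpace ℝ (Fin 3) → EuclideanSpace ℝ (Fin 3)),
        ContDiff ℝ 1 f → ∀ j, ContDiff ℝ 1 (fun x => f x j) := fun f hf j =>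
      (EuclideanSpace.proj (𝕜 := ℝ) j).contDiff.comp hf
    fin_cases i <;>
      simp only [cross3, Matrix.cons_val_zero, Matrix.cons_val_one, Matrix.head_cons,
        Matrix.cons_val_two, Matrix.tail_cons, Fin.isValue] <;>
    · exact ((hcomp _ hEf _).mul (hcomp _ hBf _)).sub ((hcomp _ hEf _).mul (hcomp _ hBf _))
  have hVper : IsLPeriodic L V := by
    intro x d
    rw [hVdef]
    dsimp only
    rw [hE0per, hE1per, hB0per, hB1per]
  -- pointwise identity
  have hpt : ∀ y : Fin 3 → ℝ,
      ρ (c3 y) * ‖u1 (c3 y)‖^2 + ‖E1 (c3 y)‖^2 + ‖B1 (c3 y)‖^2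
        = (ρ (c3 y) * ‖ustar (c3 y)‖^2 + ‖E0 (c3 y)‖^2 + ‖B0 (c3 y)‖^2)
          + (-(2*Δt)) * ∑ i, fderiv ℝ (fun z => V (c3 z) i) y (Pi.single i 1) := by
    intro y
    have hen := energy_pointwise Δt (ρ (c3 y)) (E0 (c3 y)) (E1 (c3 y)) (B0 (c3 y)) (B1 (c3 y))
      (ustar (c3 y)) (u1 (c3 y))
      (curl3 (fun w => ((2:ℝ)⁻¹) • (E0 w + E1 w)) (c3 y))
      (curl3 (fun w => ((2:ℝ)⁻¹) • (B0 w + B1 w)) (c3 y))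
      (hB (c3 y)) (hE (c3 y)) (hu (c3 y))
    have hdc := div_cross (fun w => ((2:ℝ)⁻¹) • (E0 w + E1 w))
      (fun w => ((2:ℝ)⁻¹) • (B0 w + B1 w))
      (hEf.differentiable one_ne_zero) (hBf.differentiable one_ne_zero) y
    simp only [PiLp.smul_apply, PiLp.add_apply, smul_eq_mul] at hdc
    rw [hVdef]
    linear_combination hen + (2*Δt) * hdc
  -- transfer, rewrite, and conclude
  rw [integral_periodCell L (fun x => ρ x * ‖u1 x‖ ^ 2 + ‖E1 x‖ ^ 2 + ‖B1 x‖ ^ 2),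
    integral_periodCell L (fun x => ρ x * ‖ustar x‖ ^ 2 + ‖E0 x‖ ^ 2 + ‖B0 x‖ ^ 2)]
  have hG0c : Continuous fun y : Fin 3 → ℝ =>
      ρ (c3 y) * ‖ustar (c3 y)‖ ^ 2 + ‖E0 (c3 y)‖ ^ 2 + ‖B0 (c3 y)‖ ^ 2 := by
    have hc := c3.continuous
    exact (((hρ.comp hc).mul (((hustar.comp hc).norm).pow 2)).add
      (((hE0.continuous.comp hc).norm).pow 2)).add (((hB0.continuous.comp hc).norm).pow 2)
  have hDc : Continuous fun y : Fin 3 → ℝ =>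
      ∑ i, fderiv ℝ (fun z => V (c3 z) i) y (Pi.single i 1) := by
    refine continuous_finset_sum _ fun i _ => ?_
    have hWc : ContDiff ℝ 1 (fun z => V (c3 z) i) :=
      (EuclideanSpace.proj (𝕜 := ℝ) i).contDiff.comp (hVc.comp c3.contDiff)
    exact (hWc.continuous_fderiv one_ne_zero).clm_apply continuous_const
  calc ∫ y in Set.Icc (0 : Fin 3 → ℝ) L,
        (ρ (c3 y) * ‖u1 (c3 y)‖ ^ 2 + ‖E1 (c3 y)‖ ^ 2 + ‖B1 (c3 y)‖ ^ 2)
      = ∫ y in Set.Icc (0 : Fin 3 → ℝ) L,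
          ((ρ (c3 y) * ‖ustar (c3 y)‖ ^ 2 + ‖E0 (c3 y)‖ ^ 2 + ‖B0 (c3 y)‖ ^ 2)
            + (-(2*Δt)) * ∑ i, fderiv ℝ (fun z => V (c3 z) i) y (Pi.single i 1)) := by
        apply setIntegral_congr_fun measurableSet_Icc
        intro y _
        exact hpt y
    _ = (∫ y in Set.Icc (0 : Fin 3 → ℝ) L,
          (ρ (c3 y) * ‖ustar (c3 y)‖ ^ 2 + ‖E0 (c3 y)‖ ^ 2 + ‖B0 (c3 y)‖ ^ 2))
        + ∫ y in Set.Icc (0 : Fin 3 → ℝ) L,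
            (-(2*Δt)) * ∑ i, fderiv ℝ (fun z => V (c3 z) i) y (Pi.single i 1) := by
        apply integral_add
        · exact hG0c.continuousOn.integrableOn_compact isCompact_Icc
        · exact (continuous_const.mul hDc).continuousOn.integrableOn_compact isCompact_Icc
    _ = ∫ y in Set.Icc (0 : Fin 3 → ℝ) L,
          (ρ (c3 y) * ‖ustar (c3 y)‖ ^ 2 + ‖E0 (c3 y)‖ ^ 2 + ‖B0 (c3 y)‖ ^ 2) := by
        rw [MeasureTheory.integral_const_mul, integral_div_zero L hL V hVc hVper, mul_zero, add_zero]
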